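/- arXiv:0803.3605 — 6 statements merged into one kernel-verified Lean document; each statement's English description precedes it below -/
import Mathlib

section
/- Every solution in positive integers of x² + y² = 2z² with gcd(x,y) = 1 satisfies (up to swapping x and y) x = |k² + 2kλ - λ²|, y = |-k² + 2kλ + λ²|, z = k² + λ² for some positive integers k, λ with gcd(k,λ) = 1 and k + λ odd, or (x,y,z) = (1,1,1). -/
/-!
Since `x ≡ y (mod 2)`, write `x = a + b` and `y = a - b`; then `a² + b² = z²` with `a, b` coprime.
If `x = y`, coprimality forces `x = y = z = 1`. Otherwise, by symmetry `y < x`, so `a, b > 0`,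
and the classification of primitive Pythagorean triples gives `{a, b} = {k² - l², 2kl}`,
`z = k² + l²`; in either order `x = a + b` and `y = |a - b|` are the two stated forms.
-/

theorem exists_add_sub_of_sq_add_sq_eq_two_mul_sq {x y z : ℤ}
    (heq : x ^ 2 + y ^ 2 = 2 * z ^ 2) :
    ∃ a b : ℤ, x = a + b ∧ y = a - b ∧ PythagoreanTriple a b z := by
  have hpar : Even (x + y) := by
    have : Even (x ^ 2 + y ^ 2) := ⟨z ^ 2, by rw [heq]; ring⟩
    simpa [Int.even_add, Int.even_pow] using this
  obtain ⟨a, ha⟩ := hpar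
  refine ⟨a, x - a, by ring, by linarith, ?_⟩
  have h2 : 2 * (a * a + (x - a) * (x - a)) = 2 * (z * z) := by
    linear_combination heq + (x - y - 2 * a) * ha
  exact mul_left_cancel₀ two_ne_zero h2

theorem IsCoprime.of_add_sub {R : Type*} [CommRing R] {a b : R}
    (h : IsCoprime (a + b) (a - b)) : IsCoprime a b := by
  obtain ⟨u, v, huv⟩ := h
  exact ⟨u + v, u - v, by linear_combination huv⟩

theorem PythagoreanTriple.exists_pos_of_coprime_of_odd {a b c : ℤ} (h : PythagoreanTriple a b c)
    (hcop : IsCoprime a b) (ha : a % 2 = 1) (hb : 0 < b) (hc : 0 < c) :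
    ∃ m n : ℤ, 0 < m ∧ 0 < n ∧ IsCoprime m n ∧ Odd (m + n) ∧
      a = m ^ 2 - n ^ 2 ∧ b = 2 * m * n ∧ c = m ^ 2 + n ^ 2 := by
  obtain ⟨m, n, ham, hbm, hcm, hgcd, hparity, hm⟩ :=
    h.coprime_classification' (Int.isCoprime_iff_gcd_eq_one.mp hcop) ha hc
  have hmn : 0 < m * n := by linarith
  have hm : 0 < m := lt_of_le_of_ne hm (by rintro rfl; simp at hmn)
  exact ⟨m, n, hm, pos_of_mul_pos_right hmn hm.le, Int.isCoprime_iff_gcd_eq_one.mpr hgcd,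
    Int.odd_iff.mpr (by omega), ham, hbm, hcm⟩

theorem exists_params_of_sq_add_sq_eq_two_mul_sq_of_lt {x y z : ℤ} (hy : 0 < y) (hz : 0 < z)
    (hlt : y < x) (heq : x ^ 2 + y ^ 2 = 2 * z ^ 2) (hcop : IsCoprime x y) :
    ∃ k l : ℤ, 0 < k ∧ 0 < l ∧ IsCoprime k l ∧ Odd (k + l) ∧ z = k ^ 2 + l ^ 2 ∧
      x = |k ^ 2 + 2 * k * l - l ^ 2| ∧ y = |-k ^ 2 + 2 * k * l + l ^ 2| := by
  obtain ⟨a, b, rfl, rfl, hpt⟩ := exists_add_sub_of_sq_add_sq_eq_two_mul_sq heq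
  have hab : IsCoprime a b := hcop.of_add_sub
  have hb : 0 < b := by linarith
  rcases Int.emod_two_eq_zero_or_one a with ha | ha
  · have hb2 : b % 2 = 1 := by
      by_contra hb2
      have h2a : (2 : ℤ) ∣ a := Int.dvd_of_emod_eq_zero ha
      have h2b : (2 : ℤ) ∣ b := Int.dvd_of_emod_eq_zero (by omega)
      have := Int.isUnit_iff.mp (hab.isUnit_of_dvd' h2a h2b)
      omega
    obtain ⟨k, l, hk, hl, hkl, hodd, rfl, rfl, rfl⟩ :=
      hpt.symm.exists_pos_of_coprime_of_odd hab.symm hb2 (by linarith) hz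
    refine ⟨k, l, hk, hl, hkl, hodd, rfl, ?_, ?_⟩
    · rw [abs_of_pos (by linarith)]; ring
    · rw [abs_of_pos (by linarith)]; ring
  · obtain ⟨k, l, hk, hl, hkl, hodd, rfl, rfl, rfl⟩ :=
      hpt.exists_pos_of_coprime_of_odd hab ha hb hz
    refine ⟨k, l, hk, hl, hkl, hodd, rfl, ?_, ?_⟩
    · rw [abs_of_pos (by linarith)]; ring
    · rw [abs_of_neg (by linarith)]; ring

theorem eq_one_of_isCoprime_self_of_sq_add_sq_eq_two_mul_sq {x z : ℤ} (hx : 0 < x) (hz : 0 < z)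
    (heq : x ^ 2 + x ^ 2 = 2 * z ^ 2) (hcop : IsCoprime x x) : x = 1 ∧ z = 1 := by
  have hx1 : x = 1 := by
    rcases Int.isUnit_iff.mp (isCoprime_self.mp hcop) with h | h <;> omega
  subst hx1
  exact ⟨rfl, by nlinarith⟩

theorem solutions_x_sq_add_y_sq_eq_two_z_sq (x y z : ℤ)
    (hx : 0 < x) (hy : 0 < y) (hz : 0 < z)
    (heq : x ^ 2 + y ^ 2 = 2 * z ^ 2) (hcop : IsCoprime x y) :
    (x = 1 ∧ y = 1 ∧ z = 1) ∨
    ∃ k l : ℤ, 0 < k ∧ 0 < l ∧ IsCoprime k l ∧ Odd (k + l) ∧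
      z = k ^ 2 + l ^ 2 ∧
      ((x = |k ^ 2 + 2 * k * l - l ^ 2| ∧ y = |-k ^ 2 + 2 * k * l + l ^ 2|) ∨
       (y = |k ^ 2 + 2 * k * l - l ^ 2| ∧ x = |-k ^ 2 + 2 * k * l + l ^ 2|)) := by
  rcases lt_trichotomy y x with hlt | rfl | hgt
  · obtain ⟨k, l, hk, hl, hkl, hodd, hzkl, hxkl, hykl⟩ :=
      exists_params_of_sq_add_sq_eq_two_mul_sq_of_lt hy hz hlt heq hcop
    exact Or.inr ⟨k, l, hk, hl, hkl, hodd, hzkl, Or.inl ⟨hxkl, hykl⟩⟩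
  · obtain ⟨hx1, hz1⟩ := eq_one_of_isCoprime_self_of_sq_add_sq_eq_two_mul_sq hx hz heq hcop
    exact Or.inl ⟨hx1, hx1, hz1⟩
  · obtain ⟨k, l, hk, hl, hkl, hodd, hzkl, hykl, hxkl⟩ :=
      exists_params_of_sq_add_sq_eq_two_mul_sq_of_lt hx hz hgt (by linarith) hcop.symm
    exact Or.inr ⟨k, l, hk, hl, hkl, hodd, hzkl, Or.inr ⟨hykl, hxkl⟩⟩
end

section
/- If a, b are integers with a + b odd and gcd(a,b) = 1, then gcd(a² + 2ab - b², a² + b²) = 1, and likewise for each of the sign combinations a² ± 2ab ± b². -/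
theorem gcd_sign_combinations_opposite_parity (a b : ℤ)
    (hpar : Odd (a + b)) (hcop : IsCoprime a b) :
    Int.gcd (a ^ 2 + 2 * a * b - b ^ 2) (a ^ 2 + b ^ 2) = 1 ∧
    Int.gcd (a ^ 2 + 2 * a * b + b ^ 2) (a ^ 2 + b ^ 2) = 1 ∧
    Int.gcd (a ^ 2 - 2 * a * b - b ^ 2) (a ^ 2 + b ^ 2) = 1 ∧
    Int.gcd (a ^ 2 - 2 * a * b + b ^ 2) (a ^ 2 + b ^ 2) = 1 := by
  obtain ⟨k, hk⟩ := hpar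
  set N : ℤ := a ^ 2 + b ^ 2 with hN
  -- a - b is odd
  have hodd_sub : Odd (a - b) := ⟨k - b, by omega⟩
  have hodd_add : Odd (a + b) := ⟨k, hk⟩
  -- N is odd
  have hoddN : Odd N := by
    have h1 : Odd ((a - b) ^ 2) := hodd_sub.pow
    have : Odd ((a - b) ^ 2 + 2 * (a * b)) := h1.add_even (even_two_mul _)
    have e : (a - b) ^ 2 + 2 * (a * b) = N := by ring
    rwa [e] at this
  have h2N : IsCoprime (2 : ℤ) N := by
    obtain ⟨m, hm⟩ := hoddN
    exact ⟨-m, 1, by omega⟩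
  have haN : IsCoprime a N := by
    have := (hcop.mul_right hcop).add_mul_left_right a
    have e : b * b + a * a = N := by ring
    rwa [e] at this
  have hbN : IsCoprime b N := by
    have := (hcop.symm.mul_right hcop.symm).add_mul_left_right b
    have e : a * a + b * b = N := by ring
    rwa [e] at this
  -- a+b coprime to a and b
  have hab_b : IsCoprime (a + b) b := by
    have := hcop.add_mul_left_left 1
    rwa [mul_one] at this
  have hab_a : IsCoprime (a + b) a := by
    have := hcop.symm.add_mul_left_left 1
    have e : b + a * 1 = a + b := by ring
    rwa [e] at this
  have hab_2 : IsCoprime (a + b) (2 : ℤ) := by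
    exact ⟨1, -k, by omega⟩
  have habN : IsCoprime (a + b) N := by
    have h1 : IsCoprime (a + b) (-(2 * (a * b))) :=
      ((hab_2.mul_right (hab_a.mul_right hab_b))).neg_right
    have := h1.add_mul_left_right (a + b)
    have e : -(2 * (a * b)) + (a + b) * (a + b) = N := by ring
    rwa [e] at this
  -- a - b coprime to a and b
  have hsub_b : IsCoprime (a - b) b := by
    have := hcop.add_mul_left_left (-1)
    have e : a + b * (-1) = a - b := by ring
    rwa [e] at this
  have hsub_a : IsCoprime (a - b) a := by
    have := hcop.symm.add_mul_left_left (-1)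
    have e : b + a * (-1) = -(a - b) := by ring
    rw [e] at this
    have := this.neg_left
    rwa [neg_neg] at this
  have hsub_2 : IsCoprime (a - b) (2 : ℤ) := by
    obtain ⟨m, hm⟩ := hodd_sub
    exact ⟨1, -m, by omega⟩
  have hsubN : IsCoprime (a - b) N := by
    have h1 : IsCoprime (a - b) (2 * (a * b)) :=
      hsub_2.mul_right (hsub_a.mul_right hsub_b)
    have := h1.add_mul_left_right (a - b)
    have e : 2 * (a * b) + (a - b) * (a - b) = N := by ring
    rwa [e] at this
  refine ⟨?_, ?_, ?_, ?_⟩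
  · rw [← Int.isCoprime_iff_gcd_eq_one]
    have h1 : IsCoprime (2 * b * (a - b)) N :=
      ((h2N.mul_left hbN).mul_left hsubN.symm.symm)
    have := h1.add_mul_right_left 1
    have e : 2 * b * (a - b) + 1 * N = a ^ 2 + 2 * a * b - b ^ 2 := by rw [hN]; ring
    rwa [e] at this
  · rw [← Int.isCoprime_iff_gcd_eq_one]
    have h1 : IsCoprime ((a + b) * (a + b)) N := habN.mul_left habN
    have e : (a + b) * (a + b) = a ^ 2 + 2 * a * b + b ^ 2 := by ring
    rwa [e] at h1
  · rw [← Int.isCoprime_iff_gcd_eq_one]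
    have h1 : IsCoprime (-(2 * b * (a + b))) N :=
      ((h2N.mul_left hbN).mul_left habN).neg_left
    have := h1.add_mul_right_left 1
    have e : -(2 * b * (a + b)) + 1 * N = a ^ 2 - 2 * a * b - b ^ 2 := by rw [hN]; ring
    rwa [e] at this
  · rw [← Int.isCoprime_iff_gcd_eq_one]
    have h1 : IsCoprime ((a - b) * (a - b)) N := hsubN.mul_left hsubN
    have e : (a - b) * (a - b) = a ^ 2 - 2 * a * b + b ^ 2 := by ring
    rwa [e] at h1
end

section
/- If m, n are positive integers with m > n, gcd(m,n) = 1, m + n odd, and m² - n² is a perfect square, then m = t₁² + t₂² and n = 2t₁t₂ for some positive integers t₁ > t₂ with gcd(t₁,t₂) = 1 and t₁ + t₂ odd. -/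
theorem odd_leg_square_generators (m n : ℕ)
    (hn : 0 < n) (hmn : n < m) (hcop : Nat.gcd m n = 1) (hpar : Odd (m + n))
    (hsq : ∃ s : ℕ, m ^ 2 - n ^ 2 = s ^ 2) :
    ∃ t₁ t₂ : ℕ, 0 < t₂ ∧ t₂ < t₁ ∧ Nat.gcd t₁ t₂ = 1 ∧ Odd (t₁ + t₂) ∧
      m = t₁ ^ 2 + t₂ ^ 2 ∧ n = 2 * t₁ * t₂ := by
  obtain ⟨s, hs⟩ := hsq
  have hle : n ^ 2 ≤ m ^ 2 := Nat.pow_le_pow_left hmn.le 2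
  have heq : s ^ 2 + n ^ 2 = m ^ 2 := by omega
  have hgcd : Nat.gcd s n = 1 := by
    set d := Nat.gcd s n with hd
    have hds : d ∣ s := Nat.gcd_dvd_left _ _
    have hdn : d ∣ n := Nat.gcd_dvd_right _ _
    have h2 : d ^ 2 ∣ m ^ 2 := by
      rw [← heq]
      exact Nat.dvd_add (pow_dvd_pow_of_dvd hds 2) (pow_dvd_pow_of_dvd hdn 2)
    have hdm : d ∣ m := (Nat.pow_dvd_pow_iff (by norm_num)).mp h2
    exact Nat.eq_one_of_dvd_coprimes hcop hdm hdn
  have hpt : PythagoreanTriple (s : ℤ) (n : ℤ) (m : ℤ) := by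
    unfold PythagoreanTriple
    have := congrArg (Nat.cast : ℕ → ℤ) heq
    push_cast at this
    nlinarith [this]
  have hicop : Int.gcd (s : ℤ) (n : ℤ) = 1 := by
    simpa [Int.gcd_natCast_natCast] using hgcd
  obtain ⟨a, b, hab, hz, habcop, habpar⟩ :=
    PythagoreanTriple.coprime_classification.mp ⟨hpt, hicop⟩
  have hm : (m : ℤ) = a ^ 2 + b ^ 2 := by
    rcases hz with h | h
    · exact h
    · exfalso
      have hmpos : (0 : ℤ) < (m : ℤ) := by exact_mod_cast hn.trans hmn
      nlinarith [sq_nonneg a, sq_nonneg b]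
  have hn2ab : (n : ℤ) = 2 * a * b := by
    rcases hab with ⟨_, h⟩ | ⟨_, h⟩
    · exact h
    · exfalso
      -- n odd and m odd, contradicting m + n odd
      have evsq : ∀ x : ℤ, x % 2 = 0 → Even (x ^ 2) := fun x hx => by
        rw [pow_two]; exact (Int.even_iff.mpr hx).mul_right x
      have hodd_n : Odd ((n : ℤ)) := by
        rw [h]
        rcases habpar with ⟨ha, hb⟩ | ⟨ha, hb⟩
        · exact ((evsq a ha)).sub_odd ((Int.odd_iff.mpr hb).pow)
        · exact ((Int.odd_iff.mpr ha).pow).sub_even ((evsq b hb))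
      have hodd_m : Odd ((m : ℤ)) := by
        rw [hm]
        rcases habpar with ⟨ha, hb⟩ | ⟨ha, hb⟩
        · exact ((evsq a ha)).add_odd ((Int.odd_iff.mpr hb).pow)
        · exact ((Int.odd_iff.mpr ha).pow).add_even ((evsq b hb))
      rw [Int.odd_iff] at hodd_n hodd_m
      have h1 : n % 2 = 1 := by omega
      have h2 : m % 2 = 1 := by omega
      rcases hpar with ⟨w, hw⟩
      omega
  set p := a.natAbs with hp
  set q := b.natAbs with hq
  have hpsq : ((p : ℤ)) ^ 2 = a ^ 2 := by rw [hp, ← Int.abs_eq_natAbs]; exact sq_abs a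
  have hqsq : ((q : ℤ)) ^ 2 = b ^ 2 := by rw [hq, ← Int.abs_eq_natAbs]; exact sq_abs b
  have hpq_sq : m = p ^ 2 + q ^ 2 := by
    have : (m : ℤ) = (p : ℤ) ^ 2 + (q : ℤ) ^ 2 := by rw [hm, hpsq, hqsq]
    exact_mod_cast this
  have hpqn : n = 2 * p * q := by
    have := congrArg Int.natAbs hn2ab
    simpa [Int.natAbs_mul] using this
  have hq_pos : 0 < q := by
    rcases Nat.eq_zero_or_pos q with h | h
    · exfalso; rw [hpqn, h] at hn; omega
    · exact h
  have hp_pos : 0 < p := by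
    rcases Nat.eq_zero_or_pos p with h | h
    · exfalso; rw [hpqn, h] at hn; omega
    · exact h
  have hgpq : Nat.gcd p q = 1 := habcop
  have hparpq : Odd (p + q) := by
    rcases habpar with ⟨ha, hb⟩ | ⟨ha, hb⟩
    · have h1 : Even p := Int.natAbs_even.mpr (Int.even_iff.mpr ha)
      have h2 : Odd q := Int.natAbs_odd.mpr (Int.odd_iff.mpr hb)
      exact h1.add_odd h2
    · have h1 : Odd p := Int.natAbs_odd.mpr (Int.odd_iff.mpr ha)
      have h2 : Even q := Int.natAbs_even.mpr (Int.even_iff.mpr hb)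
      exact h1.add_even h2
  have hne : p ≠ q := by
    intro h
    rcases hparpq with ⟨w, hw⟩
    omega
  rcases Nat.lt_or_ge q p with hlt | hge
  · exact ⟨p, q, hq_pos, hlt, hgpq, hparpq, hpq_sq, hpqn⟩
  · have hlt : p < q := lt_of_le_of_ne hge hne
    exact ⟨q, p, hp_pos, hlt, Nat.gcd_comm p q ▸ hgpq,
      Nat.add_comm p q ▸ hparpq, by omega, by rw [hpqn]; ring⟩
end

section
/- There is no primitive Pythagorean triple whose odd leg γ is a perfect square and for which α + γ - β is also a perfect square. -/
/-!
Write the primitive triple as `γ = m² - n²`, `β = 2mn`, `α = m² + n²`. An odd square is `1` modulo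
`4`, which forces `m` odd and `n` even; then `α + γ - β = 2m(m - n)` is twice an odd number, hence
`2` modulo `4`, and no square is.
-/

namespace PythagoreanTriple

theorem add_sub_emod_four_eq_two {x y z : ℤ} (h : PythagoreanTriple x y z)
    (h_coprime : Int.gcd x y = 1) (hx : x % 4 = 1) (hz : 0 < z) : (z + x - y) % 4 = 2 := by
  obtain ⟨m, n, rfl, rfl, rfl, -, hmn, -⟩ := h.coprime_classification' h_coprime (by omega) hz
  rcases hmn with ⟨hm, hn⟩ | ⟨hm, hn⟩
  · have hm2 : (4 : ℤ) ∣ m ^ 2 := by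
      simpa using pow_dvd_pow_of_dvd (Int.dvd_of_emod_eq_zero hm) 2
    have hn2 : n ^ 2 % 4 = 1 := Int.sq_mod_four_eq_one_of_odd (Int.odd_iff.mpr hn)
    omega
  · have hm' : Odd m := Int.odd_iff.mpr hm
    obtain ⟨k, hk⟩ : Odd (m * (m - n)) := hm'.mul (hm'.sub_even (Int.even_iff.mpr hn))
    have : m ^ 2 + n ^ 2 + (m ^ 2 - n ^ 2) - 2 * m * n = 2 * (m * (m - n)) := by ring
    omega

end PythagoreanTriple

theorem no_ppt_odd_leg_square_and_exradius_gamma_square :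
    ¬ ∃ α β γ s t : ℕ, 0 < α ∧ 0 < β ∧ 0 < γ ∧
      β ^ 2 + γ ^ 2 = α ^ 2 ∧ Nat.gcd β γ = 1 ∧ Even β ∧ Odd γ ∧
      γ = s ^ 2 ∧ α + γ - β = t ^ 2 := by
  rintro ⟨α, β, γ, s, t, hα, -, -, hpyth, hgcd, -, hγ, rfl, ht⟩
  have hs : Odd s := (Nat.odd_pow_iff two_ne_zero).mp hγ
  have hβα : β ≤ α := by nlinarith
  have htriple : PythagoreanTriple ((s ^ 2 : ℕ) : ℤ) β α := by
    unfold PythagoreanTriple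
    exact_mod_cast by linear_combination hpyth
  have hmod := htriple.add_sub_emod_four_eq_two (by rwa [Int.gcd_natCast_natCast, Nat.gcd_comm])
    (by exact_mod_cast Int.sq_mod_four_eq_one_of_odd (hs.natCast (R := ℤ))) (by exact_mod_cast hα)
  have hsq : (α : ℤ) + ((s ^ 2 : ℕ) : ℤ) - β = t * t := by
    rw [← sq, ← Nat.cast_add, ← Nat.cast_sub (by omega), ht]; norm_cast
  exact Int.sq_ne_two_mod_four t (hsq ▸ hmod)
end

section
/- In a primitive Pythagorean triple whose odd leg γ is a perfect square, the inradius diameter 2ρ = β + γ - α is a perfect square if and only if the exradius diameter 2ρ_β = α + β - γ is a perfect square. -/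
/-!
From `β² + γ² = α²` we get `(α + β)(α - β) = γ²`. The two factors are coprime: their gcd
divides both `2β` and `γ²`, which are coprime because `γ` is odd and prime to `β`. Hence
`α + β = k²`. Expanding gives `(β + γ - α)(α + β) = γ(α + β - γ)`, that is
`2ρ · k² = s² · 2ρ_β` when `γ = s²`, and an equation `a k² = s² b` with `k, s ≠ 0` makes `a` a
square exactly when `b` is one.
-/

namespace Nat

theorem exists_eq_sq_of_sq_mul_eq_sq {s b m : ℕ} (hs : s ≠ 0) (h : s ^ 2 * b = m ^ 2) :
    ∃ t, b = t ^ 2 := by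
  obtain ⟨t, rfl⟩ : s ∣ m := (Nat.pow_dvd_pow_iff two_ne_zero).mp ⟨b, h.symm⟩
  refine ⟨t, Nat.eq_of_mul_eq_mul_left (pow_pos (Nat.pos_of_ne_zero hs) 2) ?_⟩
  rw [h, mul_pow]

theorem exists_eq_sq_iff_of_mul_sq_eq_sq_mul {a b k s : ℕ} (hk : k ≠ 0) (hs : s ≠ 0)
    (h : a * k ^ 2 = s ^ 2 * b) : (∃ u, a = u ^ 2) ↔ (∃ v, b = v ^ 2) := by
  constructor
  · rintro ⟨u, rfl⟩
    exact exists_eq_sq_of_sq_mul_eq_sq hs (by rw [← h, mul_pow])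
  · rintro ⟨v, rfl⟩
    exact exists_eq_sq_of_sq_mul_eq_sq hk (by rw [mul_comm, h, mul_pow, mul_comm])

end Nat

section Pythagorean

variable {α β γ : ℕ}

theorem add_mul_sub_eq_sq_of_sq_add_sq (h : β ^ 2 + γ ^ 2 = α ^ 2) :
    (α + β) * (α - β) = γ ^ 2 := by
  rw [← Nat.sq_sub_sq, ← h, Nat.add_sub_cancel_left]

theorem coprime_add_sub_of_sq_add_sq (h : β ^ 2 + γ ^ 2 = α ^ 2) (hcop : Nat.Coprime β γ)
    (hγ : Odd γ) : Nat.Coprime (α + β) (α - β) := by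
  have hβα : β ≤ α := by nlinarith
  have hprod := add_mul_sub_eq_sq_of_sq_add_sq h
  set d := Nat.gcd (α + β) (α - β)
  have hd_sq : d ∣ γ ^ 2 := hprod ▸ (Nat.gcd_dvd_left _ _).mul_right _
  have hd_two_mul : d ∣ 2 * β := by
    have : 2 * β = (α + β) - (α - β) := by omega
    exact this ▸ Nat.dvd_sub (Nat.gcd_dvd_left _ _) (Nat.gcd_dvd_right _ _)
  have hcop' : Nat.Coprime (2 * β) (γ ^ 2) :=
    (Nat.Coprime.mul_left hγ.coprime_two_left hcop).pow_right 2
  exact Nat.Coprime.eq_one_of_dvd (hcop'.coprime_dvd_left hd_two_mul) hd_sq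

theorem exists_add_eq_sq_of_sq_add_sq (h : β ^ 2 + γ ^ 2 = α ^ 2) (hcop : Nat.Coprime β γ)
    (hγ : Odd γ) : ∃ k, α + β = k ^ 2 :=
  exists_eq_pow_of_mul_eq_pow (Nat.isUnit_iff.mpr (coprime_add_sub_of_sq_add_sq h hcop hγ))
    (add_mul_sub_eq_sq_of_sq_add_sq h)

theorem add_sub_mul_add_eq_mul_add_sub_of_sq_add_sq (h : β ^ 2 + γ ^ 2 = α ^ 2) :
    (β + γ - α) * (α + β) = γ * (α + β - γ) := by
  have hα : α ≤ β + γ := by nlinarith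
  have hγ : γ ≤ α + β := by nlinarith
  zify [hα, hγ]
  have hz : (β : ℤ) ^ 2 + γ ^ 2 = α ^ 2 := by exact_mod_cast h
  linear_combination hz

end Pythagorean

theorem inradius_square_iff_exradius_beta_square_general (α β γ : ℕ)
    (hpyth : β ^ 2 + γ ^ 2 = α ^ 2) (hcop : Nat.gcd β γ = 1)
    (hgamma : Odd γ) (hsq : ∃ s : ℕ, γ = s ^ 2) :
    (∃ u : ℕ, β + γ - α = u ^ 2) ↔ (∃ v : ℕ, α + β - γ = v ^ 2) := by
  obtain ⟨s, hs⟩ := hsq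
  obtain ⟨k, hk⟩ := exists_add_eq_sq_of_sq_add_sq hpyth hcop hgamma
  have hs0 : s ≠ 0 := by rintro rfl; simp [hs] at hgamma
  have hk0 : k ≠ 0 := by
    rintro rfl
    have hγ : γ ^ 2 = 0 := by rw [← add_mul_sub_eq_sq_of_sq_add_sq hpyth, hk]; simp
    exact pow_ne_zero 2 hgamma.pos.ne' hγ
  refine Nat.exists_eq_sq_iff_of_mul_sq_eq_sq_mul hk0 hs0 ?_
  rw [← hk, ← hs, add_sub_mul_add_eq_mul_add_sub_of_sq_add_sq hpyth]

theorem inradius_square_iff_exradius_beta_square (α β γ : ℕ)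
    (hα : 0 < α) (hβ : 0 < β) (hγ : 0 < γ)
    (hpyth : β ^ 2 + γ ^ 2 = α ^ 2) (hcop : Nat.gcd β γ = 1)
    (hbeta : Even β) (hgamma : Odd γ) (hsq : ∃ s : ℕ, γ = s ^ 2) :
    (∃ u : ℕ, β + γ - α = u ^ 2) ↔ (∃ v : ℕ, α + β - γ = v ^ 2) :=
  inradius_square_iff_exradius_beta_square_general α β γ hpyth hcop hgamma hsq
end

section
/- If (α, β, γ) is a primitive Pythagorean triple with γ odd a perfect square and β + γ - α a perfect square, then there exist coprime positive integers κ, λ of opposite parity with κ² > λ² such that α = (κ⁴+λ⁴)² + (2κ²λ²)², β = 2(κ⁴+λ⁴)(2κ²λ²), γ = (κ⁴+λ⁴)² - (2κ²λ²)². -/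
lemma nat_sq_of_coprime' {a b c : ℕ} (h : Nat.Coprime a b) (heq : a * b = c ^ 2) :
    ∃ d, a = d ^ 2 :=
  exists_eq_pow_of_mul_eq_pow (Nat.isUnit_iff.mpr h) heq

lemma nat_coprime_of_sq_coprime {a b : ℕ} (h : Nat.Coprime (a ^ 2) (b ^ 2)) :
    Nat.Coprime a b :=
  Nat.Coprime.coprime_dvd_left (dvd_pow_self a two_ne_zero)
    (Nat.Coprime.coprime_dvd_right (dvd_pow_self b two_ne_zero) h)

set_option maxHeartbeats 1000000 in
theorem ppt_odd_leg_square_inradius_square_form (α β γ : ℕ)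
    (hα : 0 < α) (hβ : 0 < β) (hγ : 0 < γ)
    (hpyth : β ^ 2 + γ ^ 2 = α ^ 2) (hcop : Nat.gcd β γ = 1)
    (hbeta : Even β) (hgamma : Odd γ)
    (hγsq : ∃ s : ℕ, γ = s ^ 2) (hρsq : ∃ u : ℕ, β + γ - α = u ^ 2) :
    ∃ κ l : ℕ, 0 < l ∧ Nat.gcd κ l = 1 ∧ Odd (κ + l) ∧ l ^ 2 < κ ^ 2 ∧
      α = (κ ^ 4 + l ^ 4) ^ 2 + (2 * κ ^ 2 * l ^ 2) ^ 2 ∧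
      β = 2 * (κ ^ 4 + l ^ 4) * (2 * κ ^ 2 * l ^ 2) ∧
      γ = (κ ^ 4 + l ^ 4) ^ 2 - (2 * κ ^ 2 * l ^ 2) ^ 2 := by
  obtain ⟨s, hs⟩ := hγsq
  obtain ⟨u, hu⟩ := hρsq
  have hβγ : Nat.Coprime β γ := hcop
  -- coprime γ α
  have hγα : Nat.Coprime γ α := by
    have h1 : Nat.Coprime (γ ^ 2) (α ^ 2) := by
      rw [← hpyth]
      exact Nat.coprime_add_self_right.mpr (Nat.Coprime.pow 2 2 hβγ.symm)
    exact nat_coprime_of_sq_coprime h1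
  -- α odd
  have hαodd : Odd α := by
    have h2 : Odd (α ^ 2) := by
      rw [← hpyth]
      have hb2 : Even (β ^ 2) := Nat.even_pow.mpr ⟨hbeta, two_ne_zero⟩
      exact hb2.add_odd hgamma.pow
    rcases Nat.even_or_odd α with h | h
    · exact absurd (Nat.even_pow.mpr ⟨h, two_ne_zero⟩) (Nat.not_even_iff_odd.mpr h2)
    · exact h
  -- γ < α
  have hγltα : γ < α := by
    have hb2p : 0 < β ^ 2 := pow_pos hβ 2
    have h3 : γ ^ 2 < α ^ 2 := by linarith
    exact lt_of_pow_lt_pow_left₀ 2 (Nat.zero_le _) h3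
  obtain ⟨i, hi⟩ := hαodd
  obtain ⟨j, hj⟩ := hgamma
  obtain ⟨k, hk⟩ := hbeta
  have hji : j < i := by omega
  obtain ⟨p, hαγp⟩ : ∃ p, α = γ + 2 * p := ⟨i - j, by omega⟩
  obtain ⟨q, hαγq⟩ : ∃ q, α + γ = 2 * q := ⟨i + j + 1, by omega⟩
  have hpqα : p + q = α := by omega
  have hqpγ : q = p + γ := by omega
  have hppos : 0 < p := by omega
  -- k^2 = p * q
  have hb2 : β ^ 2 = 4 * k ^ 2 := by rw [hk]; ring
  have hα2 : α ^ 2 = γ ^ 2 + 4 * (p * γ) + 4 * p ^ 2 := by rw [hαγp]; ring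
  have hpq2 : p * q = p ^ 2 + p * γ := by rw [hqpγ]; ring
  have hkpq : k ^ 2 = p * q := by linarith
  -- coprime p q
  have hpq : Nat.Coprime p q := by
    have h1 : Nat.gcd p q ∣ α := hpqα ▸ Nat.dvd_add (Nat.gcd_dvd_left p q) (Nat.gcd_dvd_right p q)
    have h2 : Nat.gcd p q ∣ γ := by
      have h3 := Nat.dvd_sub (Nat.gcd_dvd_right p q) (Nat.gcd_dvd_left p q)
      have he : q - p = γ := by omega
      rwa [he] at h3
    have h4 := Nat.dvd_gcd h2 h1
    rw [hγα] at h4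
    exact Nat.dvd_one.mp h4
  obtain ⟨n, hn⟩ := nat_sq_of_coprime' hpq hkpq.symm
  obtain ⟨m, hm⟩ := nat_sq_of_coprime' hpq.symm (by rw [mul_comm]; exact hkpq.symm)
  -- k = n * m
  have hknm : k = n * m := by
    have h5 : k ^ 2 = (n * m) ^ 2 := by rw [hkpq, hn, hm]; ring
    exact Nat.pow_left_injective (by norm_num) h5
  have hm2 : m ^ 2 = n ^ 2 + γ := by linarith [hqpγ]
  have hmn : n < m := by
    have h6 : n ^ 2 < m ^ 2 := by linarith
    exact lt_of_pow_lt_pow_left₀ 2 (Nat.zero_le _) h6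
  have hnpos : 0 < n := by
    rcases Nat.eq_zero_or_pos n with h | h
    · exfalso; rw [h] at hn; simp at hn; omega
    · exact h
  have hcmn : Nat.Coprime n m := nat_coprime_of_sq_coprime (by rw [← hn, ← hm]; exact hpq)
  -- γ = P * S with m = n + P, S = 2n + P
  obtain ⟨P, hP⟩ : ∃ P, m = n + P := ⟨m - n, by omega⟩
  have hPpos : 0 < P := by omega
  have e1 : m ^ 2 = n ^ 2 + 2 * (n * P) + P ^ 2 := by rw [hP]; ring
  obtain ⟨S, hS⟩ : ∃ S, S = 2 * n + P := ⟨_, rfl⟩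
  have e2 : P * S = 2 * (n * P) + P ^ 2 := by rw [hS]; ring
  have hγPS : γ = P * S := by linarith
  have hγodd : Odd γ := ⟨j, hj⟩
  have hPodd : Odd P := by
    rcases Nat.even_or_odd P with h | h
    · exfalso
      obtain ⟨w, hw⟩ := h
      obtain ⟨W, hW⟩ : ∃ W, γ = 2 * W := ⟨w * S, by rw [hγPS, hw]; ring⟩
      omega
    · exact h
  have hSodd : Odd S := by
    obtain ⟨w, hw⟩ := hPodd
    exact ⟨n + w, by omega⟩
  -- coprime P S
  have hPS : Nat.Coprime P S := by
    have h2 : Nat.Coprime (Nat.gcd P S) 2 := by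
      have hdγ : Nat.gcd P S ∣ γ := hγPS ▸ Dvd.dvd.mul_right (Nat.gcd_dvd_left P S) _
      rcases Nat.even_or_odd (Nat.gcd P S) with h | h
      · exfalso
        obtain ⟨z, hz⟩ := hγodd
        obtain ⟨w, hw⟩ := h
        obtain ⟨e, he⟩ := hdγ
        obtain ⟨W, hW⟩ : ∃ W, γ = 2 * W := ⟨w * e, by rw [he, hw]; ring⟩
        omega
      · exact Nat.coprime_two_right.mpr h
    have hdm : Nat.gcd P S ∣ m := by
      have h1 : Nat.gcd P S ∣ 2 * m := by
        have h7 := Nat.dvd_add (Nat.gcd_dvd_left P S) (Nat.gcd_dvd_right P S)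
        have he : P + S = 2 * m := by omega
        rwa [he] at h7
      exact h2.dvd_of_dvd_mul_left h1
    have hdn : Nat.gcd P S ∣ n := by
      have h1 : Nat.gcd P S ∣ 2 * n := by
        have h7 := Nat.dvd_sub (Nat.gcd_dvd_right P S) (Nat.gcd_dvd_left P S)
        have he : S - P = 2 * n := by omega
        rwa [he] at h7
      exact h2.dvd_of_dvd_mul_left h1
    have h8 := Nat.dvd_gcd hdn hdm
    rw [hcmn] at h8
    exact Nat.dvd_one.mp h8
  obtain ⟨a, ha⟩ := nat_sq_of_coprime' hPS (by rw [← hγPS, hs])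
  obtain ⟨b, hb⟩ := nat_sq_of_coprime' hPS.symm (by rw [mul_comm, ← hγPS, hs])
  -- β + γ - α = 2 n P
  have hβval : β = 2 * (n * m) := by rw [hk, hknm]; ring
  have hαval : α = n ^ 2 + m ^ 2 := by linarith
  have e3 : n * m = n ^ 2 + n * P := by rw [hP]; ring
  have hkey : β + γ = α + 2 * (n * P) := by
    rw [hβval, hαval]; linarith
  have hle : α ≤ β + γ := hkey ▸ Nat.le_add_right α _
  rw [Nat.sub_eq_iff_eq_add hle] at hu
  have hu2 : 2 * (n * P) = u ^ 2 := by linarith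
  -- coprime 2n P
  have hnP : Nat.Coprime n P := by
    have h1 : Nat.gcd n P ∣ m := hP ▸ Nat.dvd_add (Nat.gcd_dvd_left n P) (Nat.gcd_dvd_right n P)
    have h9 := Nat.dvd_gcd (Nat.gcd_dvd_left n P) h1
    rw [hcmn] at h9
    exact Nat.dvd_one.mp h9
  have h2nP : Nat.Coprime (2 * n) P :=
    Nat.Coprime.mul (Nat.coprime_two_left.mpr hPodd) hnP
  obtain ⟨v, hv⟩ := nat_sq_of_coprime' h2nP (by rw [mul_assoc]; exact hu2)
  have hveven : Even v := by
    rcases Nat.even_or_odd v with h | h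
    · exact h
    · exfalso
      obtain ⟨z, hz⟩ := h.pow (n := 2)
      have : 2 * n = 2 * z + 1 := by linarith
      omega
  obtain ⟨t, ht⟩ := hveven
  have hv4 : v ^ 2 = 4 * t ^ 2 := by rw [ht]; ring
  have hnt : n = 2 * t ^ 2 := by linarith
  have htpos : 0 < t := by
    rcases Nat.eq_zero_or_pos t with h | h
    · exfalso; rw [h] at hnt; simp at hnt; omega
    · exact h
  -- a, b odd
  have haodd : Odd a := by
    rcases Nat.even_or_odd a with h | h
    · exfalso
      obtain ⟨z, hz⟩ := Nat.even_pow.mpr ⟨h, two_ne_zero⟩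
      obtain ⟨w, hw⟩ := hPodd
      have : z + z = 2 * w + 1 := by linarith
      omega
    · exact h
  have hbodd : Odd b := by
    rcases Nat.even_or_odd b with h | h
    · exfalso
      obtain ⟨z, hz⟩ := Nat.even_pow.mpr ⟨h, two_ne_zero⟩
      obtain ⟨w, hw⟩ := hSodd
      have : z + z = 2 * w + 1 := by linarith
      omega
    · exact h
  have hb2a2 : b ^ 2 = a ^ 2 + 4 * t ^ 2 := by rw [← hb, ← ha]; linarith
  have hab : a < b := by
    have h10 : 0 < t ^ 2 := pow_pos htpos 2
    have h11 : a ^ 2 < b ^ 2 := by linarith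
    exact lt_of_pow_lt_pow_left₀ 2 (Nat.zero_le _) h11
  obtain ⟨x, hx⟩ := haodd
  obtain ⟨y, hy⟩ := hbodd
  obtain ⟨c, hc⟩ : ∃ c, b = a + 2 * c := ⟨y - x, by omega⟩
  have hcpos : 0 < c := by omega
  obtain ⟨d, hd⟩ : ∃ d, d = a + c := ⟨_, rfl⟩
  have e4 : b ^ 2 = a ^ 2 + 4 * (a * c) + 4 * c ^ 2 := by rw [hc]; ring
  have e5 : c * d = a * c + c ^ 2 := by rw [hd]; ring
  have htcd : t ^ 2 = c * d := by linarith
  have hcab : Nat.Coprime a b := nat_coprime_of_sq_coprime (by rw [← ha, ← hb]; exact hPS)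
  have hcd : Nat.Coprime c d := by
    have h1 : Nat.gcd c d ∣ a := by
      have h12 := Nat.dvd_sub (Nat.gcd_dvd_right c d) (Nat.gcd_dvd_left c d)
      have he : d - c = a := by omega
      rwa [he] at h12
    have h2 : Nat.gcd c d ∣ b := by
      have h12 := Nat.dvd_add (Nat.gcd_dvd_left c d) (Nat.gcd_dvd_right c d)
      have he : c + d = b := by omega
      rwa [he] at h12
    have h13 := Nat.dvd_gcd h1 h2
    rw [hcab] at h13
    exact Nat.dvd_one.mp h13
  obtain ⟨l, hl⟩ := nat_sq_of_coprime' hcd htcd.symm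
  obtain ⟨κ, hκ⟩ := nat_sq_of_coprime' hcd.symm (by rw [mul_comm]; exact htcd.symm)
  have hκ2 : κ ^ 2 = l ^ 2 + a := by
    have : d = a + c := hd
    linarith [hκ, hl]
  have ha0 : 0 < a := by
    rcases Nat.eq_zero_or_pos a with h | h
    · exfalso; rw [h] at ha; simp at ha; omega
    · exact h
  -- key identities
  have ht2 : t ^ 2 = κ ^ 2 * l ^ 2 := by rw [htcd, hl, hκ]; ring
  have e6 : κ ^ 4 = l ^ 4 + 2 * (l ^ 2 * a) + a ^ 2 := by
    calc κ ^ 4 = (κ ^ 2) ^ 2 := by ring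
    _ = (l ^ 2 + a) ^ 2 := by rw [hκ2]
    _ = l ^ 4 + 2 * (l ^ 2 * a) + a ^ 2 := by ring
  have e7 : κ ^ 2 * l ^ 2 = l ^ 4 + l ^ 2 * a := by
    calc κ ^ 2 * l ^ 2 = (l ^ 2 + a) * l ^ 2 := by rw [hκ2]
    _ = l ^ 4 + l ^ 2 * a := by ring
  have hmval : m = κ ^ 4 + l ^ 4 := by
    have h14 : m = 2 * t ^ 2 + a ^ 2 := by rw [hP, hnt, ha]
    linarith
  have hnval : n = 2 * κ ^ 2 * l ^ 2 := by rw [hnt, ht2]; ring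
  refine ⟨κ, l, ?_, ?_, ?_, ?_, ?_, ?_, ?_⟩
  · rcases Nat.eq_zero_or_pos l with h | h
    · exfalso; rw [h] at hl; simp at hl; omega
    · exact h
  · exact (nat_coprime_of_sq_coprime (by rw [← hl, ← hκ]; exact hcd)).symm
  · rcases Nat.even_or_odd κ with h1 | h1 <;> rcases Nat.even_or_odd l with h2 | h2
    · exfalso
      obtain ⟨z1, hz1⟩ := Nat.even_pow.mpr ⟨h1, two_ne_zero⟩
      obtain ⟨z2, hz2⟩ := Nat.even_pow.mpr ⟨h2, two_ne_zero⟩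
      have : z1 + z1 = z2 + z2 + a := by linarith
      omega
    · obtain ⟨z1, hz1⟩ := h1; obtain ⟨z2, hz2⟩ := h2; exact ⟨z1 + z2, by omega⟩
    · obtain ⟨z1, hz1⟩ := h1; obtain ⟨z2, hz2⟩ := h2; exact ⟨z1 + z2, by omega⟩
    · exfalso
      obtain ⟨z1, hz1⟩ := h1.pow (n := 2)
      obtain ⟨z2, hz2⟩ := h2.pow (n := 2)
      have : 2 * z1 + 1 = 2 * z2 + 1 + a := by linarith
      omega
  · linarith
  · rw [hαval, hmval, hnval]; ring
  · rw [hβval, hmval, hnval]; ring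
  · have hγval : γ = m ^ 2 - n ^ 2 := Nat.eq_sub_of_add_eq (by linarith)
    rw [hγval, hmval, hnval]
end
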